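/- Let R be a commutative ring, D a subring of R with the same identity element 1, and I an ideal of the free R-algebra R⟨X⟩ = R⟨X₁,...,Xₙ⟩ generated by a subset G ⊆ D⟨X⟩ which is a monic Gröbner basis of I in R⟨X⟩ with respect to a monomial ordering ≺ on B_R. Then G is a Gröbner basis of the ideal I ∩ D⟨X⟩ in D⟨X⟩ with respect to the same monomial ordering ≺ on the standard D-basis B_D, hence I ∩ D⟨X⟩ = ⟨G⟩ holds in D⟨X⟩; moreover the set of normal words in B_D (mod G) coincides with the set of normal words in B_R (mod G). -/

import Mathlib

/-!
Leading monomials and leading coefficients are read off the support, and the inclusion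
`D⟨X⟩ → R⟨X⟩` preserves supports; so the Gröbner property of `G` in `R⟨X⟩` restricts verbatim
to `I ∩ D⟨X⟩`, and the normal words of `G` are the same over `D` and over `R`. That `G` then
generates `I ∩ D⟨X⟩` holds for monic Gröbner bases over any coefficient ring: if
`LM(f) = a LM(g) b`, then `f - LC(f) a g b` has a strictly smaller leading monomial, and `≺` is
well-founded.
-/

open scoped Classical

/-- Words in the alphabet `X₁,...,Xₙ`: the standard basis `B` of monomials of the free algebra. -/
abbrev Word (n : ℕ) : Type := FreeMonoid (Fin n)

/-- The free `R`-algebra `R⟨X₁,...,Xₙ⟩`, realized as the monoid algebra on words. -/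
abbrev FreeAlg (R : Type) [CommRing R] (n : ℕ) : Type := MonoidAlgebra R (Word n)

/-- `v` divides `u` as words: `u = w * v * s` for some words `w, s`. -/
def WordDvd {n : ℕ} (v u : Word n) : Prop := ∃ w s : Word n, u = w * v * s

/-- A monomial ordering on the words in `X₁,...,Xₙ`: a well-ordering `≺` such that
(M1) `u ≺ v` implies `w*u*s ≺ w*v*s`, and (M2) `w = u*v` implies `u ⪯ w` and `v ⪯ w`. -/
structure MonomialOrdering (n : ℕ) where
  lt : Word n → Word n → Prop
  strictTotal : IsStrictTotalOrder (Word n) lt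
  wellFounded : WellFounded lt
  mul_compat : ∀ w u v s : Word n, lt u v → lt (w * u * s) (w * v * s)
  factor_le : ∀ u v : Word n, ¬ lt (u * v) u ∧ ¬ lt (u * v) v

namespace MonomialOrdering

/-- `u ⪯ v` for a monomial ordering. -/
def le {n : ℕ} (o : MonomialOrdering n) (u v : Word n) : Prop := u = v ∨ o.lt u v

end MonomialOrdering

/-- The leading monomial `LM(f)` of `f`: the `≺`-greatest word occurring in `f`
(with junk value `1` if `f = 0`). -/
noncomputable def LM {R : Type} [CommRing R] {n : ℕ} (o : MonomialOrdering n)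
    (f : FreeAlg R n) : Word n :=
  if h : ∃ w, w ∈ f.coeff.support ∧ ∀ u ∈ f.coeff.support, o.le u w then h.choose else 1

/-- The leading coefficient `LC(f)` of `f`: the coefficient of `LM(f)` in `f`. -/
noncomputable def LC {R : Type} [CommRing R] {n : ℕ} (o : MonomialOrdering n)
    (f : FreeAlg R n) : R := f.coeff (LM o f)

/-- A subset `G` is monic if every `g ∈ G` is nonzero with leading coefficient `1`. -/
def IsMonicSet {R : Type} [CommRing R] {n : ℕ} (o : MonomialOrdering n)
    (G : Set (FreeAlg R n)) : Prop := ∀ g ∈ G, g ≠ 0 ∧ LC o g = 1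

/-- `G` is a monic Gröbner basis of the two-sided ideal `I`: a monic subset of `I` such that
the leading monomial of every nonzero `f ∈ I` is divisible by `LM(g)` for some `g ∈ G`. -/
def IsMonicGB {R : Type} [CommRing R] {n : ℕ} (o : MonomialOrdering n)
    (G : Set (FreeAlg R n)) (I : TwoSidedIdeal (FreeAlg R n)) : Prop :=
  (∀ g ∈ G, g ∈ I) ∧ IsMonicSet o G ∧
    ∀ f : FreeAlg R n, f ∈ I → f ≠ 0 → ∃ g ∈ G, WordDvd (LM o g) (LM o f)

/-- The word `u` viewed as a monomial (with coefficient `1`) of the free algebra. -/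
noncomputable def mono (R : Type) [CommRing R] {n : ℕ} (u : Word n) : FreeAlg R n :=
  MonoidAlgebra.single u 1

/-- `f` has a Gröbner representation `f = Σ_{i} λ_i u_i g_i v_i` with
`LM(u_i g_i v_i) ⪯ LM(f)` whenever `λ_i ≠ 0`. -/
def HasGroebnerRep {R : Type} [CommRing R] {n : ℕ} (o : MonomialOrdering n)
    (G : Set (FreeAlg R n)) (f : FreeAlg R n) : Prop :=
  ∃ (m : ℕ) (lam : Fin m → R) (u v : Fin m → Word n) (g : Fin m → FreeAlg R n),
    (∀ i, g i ∈ G) ∧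
    f = ∑ i, lam i • (mono R (u i) * g i * mono R (v i)) ∧
    ∀ i, lam i ≠ 0 → o.le (LM o (mono R (u i) * g i * mono R (v i))) (LM o f)

/-- The set `N(G)` of normal words (mod `G`): words divisible by no `LM(g)`, `g ∈ G`. -/
def NSet {R : Type} [CommRing R] {n : ℕ} (o : MonomialOrdering n)
    (G : Set (FreeAlg R n)) : Set (Word n) :=
  {u : Word n | ∀ g ∈ G, ¬ WordDvd (LM o g) u}

/-- `f` is a normal element (mod `G`): every word occurring in `f` is normal. -/
def IsNormal {R : Type} [CommRing R] {n : ℕ} (o : MonomialOrdering n)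
    (G : Set (FreeAlg R n)) (f : FreeAlg R n) : Prop :=
  ∀ u ∈ f.coeff.support, u ∈ NSet o G

/-- `G` is LM-reduced: `LM(g) ∤ LM(g')` for distinct `g, g' ∈ G`. -/
def LMReduced {R : Type} [CommRing R] {n : ℕ} (o : MonomialOrdering n)
    (G : Set (FreeAlg R n)) : Prop :=
  ∀ g ∈ G, ∀ g' ∈ G, g ≠ g' → ¬ WordDvd (LM o g) (LM o g')

/-- The canonical inclusion `S⟨X₁,...,Xₙ⟩ → T⟨X₁,...,Xₙ⟩` induced by the coefficient
algebra map `S → T`; it sends `Σ λ_u · u` to `Σ λ_u · u` (coefficients mapped along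
`algebraMap S T`). -/
noncomputable def coeffIncl (S : Type) [CommRing S] (T : Type) [CommRing T] [Algebra S T]
    (n : ℕ) : FreeAlg S n →ₐ[S] FreeAlg T n :=
  MonoidAlgebra.lift S (FreeAlg T n) (Word n) (MonoidAlgebra.of T (Word n))

namespace MonomialOrdering

variable {n : ℕ} (o : MonomialOrdering n)

theorem le_antisymm {u v : Word n} (huv : o.le u v) (hvu : o.le v u) : u = v := by
  have := o.strictTotal
  rcases huv with rfl | huv
  · rfl
  rcases hvu with rfl | hvu
  · rfl
  exact absurd (_root_.trans huv hvu) (irrefl u)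

theorem le_mul_mul {u v : Word n} (w s : Word n) (h : o.le u v) :
    o.le (w * u * s) (w * v * s) :=
  h.imp (congrArg (w * · * s)) (o.mul_compat w u v s)

end MonomialOrdering

section LeadingMonomial

variable {S : Type} [CommRing S] {n : ℕ} (o : MonomialOrdering n)

theorem exists_max_mem_support {f : FreeAlg S n} (hf : f ≠ 0) :
    ∃ w, w ∈ f.coeff.support ∧ ∀ u ∈ f.coeff.support, o.le u w := by
  have := o.strictTotal
  let _ : LinearOrder (Word n) := linearOrderOfSTO o.lt
  obtain ⟨w, hw, hmax⟩ :=
    f.coeff.support.exists_max_image id (Finsupp.support_nonempty_iff.2 (by simpa using hf))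
  exact ⟨w, hw, hmax⟩

theorem LM_spec {f : FreeAlg S n} (hf : f ≠ 0) :
    LM o f ∈ f.coeff.support ∧ ∀ u ∈ f.coeff.support, o.le u (LM o f) := by
  rw [LM, dif_pos (exists_max_mem_support o hf)]
  exact (exists_max_mem_support o hf).choose_spec

theorem LM_mem_support {f : FreeAlg S n} (hf : f ≠ 0) : LM o f ∈ f.coeff.support :=
  (LM_spec o hf).1

theorem le_LM {f : FreeAlg S n} {u : Word n} (hu : u ∈ f.coeff.support) : o.le u (LM o f) :=
  (LM_spec o (by rintro rfl; simp at hu)).2 u hu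

theorem LM_eq_of_forall_le {f : FreeAlg S n} {w : Word n} (hw : w ∈ f.coeff.support)
    (hmax : ∀ u ∈ f.coeff.support, o.le u w) : LM o f = w :=
  o.le_antisymm (hmax _ (LM_mem_support o (by rintro rfl; simp at hw))) (le_LM o hw)

theorem LM_zero : LM o (0 : FreeAlg S n) = 1 := by
  rw [LM, dif_neg]
  rintro ⟨w, hw, -⟩
  simp at hw

end LeadingMonomial

section TwoSidedShift

variable {S : Type} [CommRing S] {n : ℕ}

theorem mono_mul_mul_mono (a b : Word n) (f : FreeAlg S n) :
    mono S a * f * mono S b = MonoidAlgebra.mapDomain (a * · * b) f := by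
  induction f using MonoidAlgebra.induction_linear with
  | zero => simp
  | add f g hf hg => rw [mul_add, add_mul, hf, hg, MonoidAlgebra.mapDomain_add]
  | single w c =>
      rw [mono, mono, MonoidAlgebra.single_mul_single, MonoidAlgebra.single_mul_single, one_mul,
        mul_one, MonoidAlgebra.mapDomain_single]

theorem mul_mul_injective (a b : Word n) : Function.Injective (a * · * b) :=
  fun _ _ h => mul_left_cancel (mul_right_cancel h)

theorem coeff_mono_mul_mul_mono (a b : Word n) (f : FreeAlg S n) (u : Word n) :
    (mono S a * f * mono S b).coeff (a * u * b) = f.coeff u := by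
  rw [mono_mul_mul_mono]
  exact Finsupp.mapDomain_apply (mul_mul_injective a b) _ _

theorem exists_eq_of_mem_support_mono_mul_mul_mono {a b : Word n} {f : FreeAlg S n} {u : Word n}
    (hu : u ∈ (mono S a * f * mono S b).coeff.support) :
    ∃ v ∈ f.coeff.support, u = a * v * b := by
  rw [mono_mul_mul_mono] at hu
  obtain ⟨v, hv, rfl⟩ := Finset.mem_image.1 (Finsupp.mapDomain_support hu)
  exact ⟨v, hv, rfl⟩

theorem LM_mono_mul_mul_mono (o : MonomialOrdering n) {f : FreeAlg S n} (hf : f ≠ 0)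
    (a b : Word n) : LM o (mono S a * f * mono S b) = a * LM o f * b := by
  refine LM_eq_of_forall_le o ?_ ?_
  · rw [Finsupp.mem_support_iff, coeff_mono_mul_mul_mono]
    exact Finsupp.mem_support_iff.1 (LM_mem_support o hf)
  · intro u hu
    obtain ⟨v, hv, rfl⟩ := exists_eq_of_mem_support_mono_mul_mul_mono hu
    exact o.le_mul_mul a b (le_LM o hv)

theorem smul_mono_mul_mul_mono_mem {J : TwoSidedIdeal (FreeAlg S n)} {g : FreeAlg S n}
    (hg : g ∈ J) (c : S) (a b : Word n) : c • (mono S a * g * mono S b) ∈ J := by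
  rw [Algebra.smul_def]
  exact J.mul_mem_left _ _ (J.mul_mem_right _ _ (J.mul_mem_left _ _ hg))

end TwoSidedShift

section Reduction

variable {S : Type} [CommRing S] {n : ℕ} (o : MonomialOrdering n)

theorem lt_LM_of_mem_support_reduce {f g : FreeAlg S n} (hg : g ≠ 0) (hLC : LC o g = 1)
    {a b : Word n} (hab : LM o f = a * LM o g * b) {u : Word n}
    (hu : u ∈ (f - LC o f • (mono S a * g * mono S b)).coeff.support) : o.lt u (LM o f) := by
  set t := mono S a * g * mono S b
  have hLMt : LM o t = LM o f := by rw [LM_mono_mul_mul_mono o hg, hab]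
  have hcancel : (f - LC o f • t).coeff (LM o f) = 0 := by
    rw [MonoidAlgebra.coeff_sub, MonoidAlgebra.coeff_smul, Finsupp.sub_apply, Finsupp.smul_apply,
      hab, coeff_mono_mul_mul_mono, ← LC, hLC, smul_eq_mul, mul_one, ← hab, LC, sub_self]
  have hle : o.le u (LM o f) := by
    rw [MonoidAlgebra.coeff_sub, MonoidAlgebra.coeff_smul] at hu
    rcases Finset.mem_union.1 (Finsupp.support_sub hu) with hf | ht
    · exact le_LM o hf
    · exact hLMt ▸ le_LM o (Finsupp.support_smul ht)
  exact hle.resolve_left (by rintro rfl; exact Finsupp.mem_support_iff.1 hu hcancel)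

theorem IsMonicGB.span_eq {G : Set (FreeAlg S n)} {J : TwoSidedIdeal (FreeAlg S n)}
    (hGB : IsMonicGB o G J) : TwoSidedIdeal.span G = J := by
  refine le_antisymm (TwoSidedIdeal.span_le.2 hGB.1) fun f hfJ => ?_
  induction f using (InvImage.wf (LM o) o.wellFounded).induction with
  | _ f ih =>
    rcases eq_or_ne f 0 with rfl | hf
    · exact TwoSidedIdeal.zero_mem _
    obtain ⟨g, hgG, a, b, hab⟩ := hGB.2.2 f hfJ hf
    obtain ⟨hg, hLC⟩ := hGB.2.1 g hgG
    set t := LC o f • (mono S a * g * mono S b)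
    have htG : t ∈ TwoSidedIdeal.span G :=
      smul_mono_mul_mul_mono_mem (TwoSidedIdeal.subset_span hgG) _ a b
    have hreduced : f - t ∈ TwoSidedIdeal.span G := by
      rcases eq_or_ne (f - t) 0 with h0 | hne
      · exact h0 ▸ TwoSidedIdeal.zero_mem _
      refine ih _ (lt_LM_of_mem_support_reduce o hg hLC hab (LM_mem_support o hne)) ?_
      exact J.sub_mem hfJ (smul_mono_mul_mul_mono_mem (hGB.1 g hgG) _ a b)
    simpa using TwoSidedIdeal.add_mem _ hreduced htG

end Reduction

section CoeffIncl

variable {S T : Type} [CommRing S] [CommRing T] [Algebra S T] {n : ℕ}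

theorem coeffIncl_single (w : Word n) (c : S) :
    coeffIncl S T n (MonoidAlgebra.single w c) = MonoidAlgebra.single w (algebraMap S T c) := by
  rw [coeffIncl, MonoidAlgebra.lift_single, MonoidAlgebra.of_apply, MonoidAlgebra.smul_single,
    Algebra.smul_def, mul_one]

theorem coeff_coeffIncl (f : FreeAlg S n) (u : Word n) :
    (coeffIncl S T n f).coeff u = algebraMap S T (f.coeff u) := by
  induction f using MonoidAlgebra.induction_linear with
  | zero => simp
  | add f g hf hg => simp only [map_add, MonoidAlgebra.coeff_add, Finsupp.add_apply, hf, hg]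
  | single w c => simp [coeffIncl_single, Finsupp.single_apply, apply_ite (algebraMap S T)]

theorem support_coeffIncl (hinj : Function.Injective (algebraMap S T)) (f : FreeAlg S n) :
    (coeffIncl S T n f).coeff.support = f.coeff.support := by
  ext u
  simp only [Finsupp.mem_support_iff, coeff_coeffIncl, ne_eq, hinj.eq_iff' (map_zero _)]

theorem coeffIncl_ne_zero (hinj : Function.Injective (algebraMap S T)) {f : FreeAlg S n}
    (hf : f ≠ 0) : coeffIncl S T n f ≠ 0 := by
  intro h
  apply hf
  rw [← MonoidAlgebra.coeff_eq_zero, ← Finsupp.support_eq_empty, ← support_coeffIncl hinj f, h,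
    MonoidAlgebra.coeff_zero, Finsupp.support_zero]

theorem LM_coeffIncl (hinj : Function.Injective (algebraMap S T))
    (o : MonomialOrdering n) (f : FreeAlg S n) :
    LM o (coeffIncl S T n f) = LM o f := by
  rcases eq_or_ne f 0 with rfl | hf
  · rw [map_zero, LM_zero, LM_zero]
  refine LM_eq_of_forall_le o ?_ fun u hu => ?_
  · exact (support_coeffIncl hinj f).symm ▸ LM_mem_support o hf
  · exact le_LM o ((support_coeffIncl hinj f) ▸ hu)

theorem LC_coeffIncl (hinj : Function.Injective (algebraMap S T))
    (o : MonomialOrdering n) (f : FreeAlg S n) :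
    LC o (coeffIncl S T n f) = algebraMap S T (LC o f) := by
  rw [LC, LC, LM_coeffIncl hinj, coeff_coeffIncl]

theorem IsMonicGB.comap_coeffIncl {o : MonomialOrdering n} {G : Set (FreeAlg S n)}
    {I : TwoSidedIdeal (FreeAlg T n)} (hinj : Function.Injective (algebraMap S T))
    (hGB : IsMonicGB o (coeffIncl S T n '' G) I) :
    IsMonicGB o G (TwoSidedIdeal.comap (coeffIncl S T n).toRingHom I) := by
  refine ⟨fun g hg => hGB.1 _ ⟨g, hg, rfl⟩, fun g hg => ?_, fun f hfI hf => ?_⟩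
  · obtain ⟨hg0, hLC⟩ := hGB.2.1 _ ⟨g, hg, rfl⟩
    refine ⟨by rintro rfl; exact hg0 (map_zero _), hinj ?_⟩
    rw [← LC_coeffIncl hinj, hLC, map_one]
  · obtain ⟨_, ⟨g, hg, rfl⟩, hdvd⟩ :=
      hGB.2.2 (coeffIncl S T n f) hfI (coeffIncl_ne_zero hinj hf)
    rw [LM_coeffIncl hinj, LM_coeffIncl hinj] at hdvd
    exact ⟨g, hg, hdvd⟩

theorem NSet_image_coeffIncl (hinj : Function.Injective (algebraMap S T))
    (o : MonomialOrdering n) (G : Set (FreeAlg S n)) :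
    NSet o (coeffIncl S T n '' G) = NSet o G := by
  ext u
  simp [NSet, LM_coeffIncl hinj]

end CoeffIncl

theorem groebner_descends_to_subring_general {R : Type} [CommRing R] {n : ℕ}
    (o : MonomialOrdering n) (D : Subring R) (G : Set (FreeAlg ↥D n))
    (I : TwoSidedIdeal (FreeAlg R n))
    (hGB : IsMonicGB o (⇑(coeffIncl ↥D R n) '' G) I) :
    IsMonicGB o G (TwoSidedIdeal.comap (coeffIncl ↥D R n).toRingHom I) ∧
    TwoSidedIdeal.comap (coeffIncl ↥D R n).toRingHom I = TwoSidedIdeal.span G ∧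
    NSet o G = NSet o (⇑(coeffIncl ↥D R n) '' G) := by
  have hinj : Function.Injective (algebraMap ↥D R) := Subtype.val_injective
  have hGB' := hGB.comap_coeffIncl hinj
  exact ⟨hGB', (hGB'.span_eq o).symm, (NSet_image_coeffIncl hinj o G).symm⟩

/-- **Theorem 5.2 (i).**  Let `R` be a commutative ring, `D` a subring of `R` with the same
identity, and `I` the ideal of `R⟨X₁,...,Xₙ⟩` generated by a subset `G ⊆ D⟨X⟩` which is a
monic Gröbner basis of `I` in `R⟨X⟩`.  Then `G` is a (monic) Gröbner basis for the ideal
`I ∩ D⟨X⟩` of `D⟨X⟩` with respect to the same monomial ordering, hence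
`I ∩ D⟨X⟩ = ⟨G⟩` holds in `D⟨X⟩`; moreover the set of normal words in `B_D` (mod `G`)
coincides with the set of normal words in `B_R` (mod `G`). -/
theorem groebner_descends_to_subring {R : Type} [CommRing R] {n : ℕ}
    (o : MonomialOrdering n) (D : Subring R) (G : Set (FreeAlg ↥D n))
    (I : TwoSidedIdeal (FreeAlg R n))
    (hgen : I = TwoSidedIdeal.span (⇑(coeffIncl ↥D R n) '' G))
    (hGB : IsMonicGB o (⇑(coeffIncl ↥D R n) '' G) I) :
    IsMonicGB o G (TwoSidedIdeal.comap (coeffIncl ↥D R n).toRingHom I) ∧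
    TwoSidedIdeal.comap (coeffIncl ↥D R n).toRingHom I = TwoSidedIdeal.span G ∧
    NSet o G = NSet o (⇑(coeffIncl ↥D R n) '' G) :=
  groebner_descends_to_subring_general o D G I hGB
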